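/- For every k ≥ 2, the class of languages generated by CD grammar systems with forbidden random context entry conditions in the ≥k mode equals the corresponding class for the ≥2 mode, both with and without erasing productions: CD(≥k, frc) = CD(≥2, frc) and CD^{-λ}(≥k, frc) = CD^{-λ}(≥2, frc). -/

import Mathlib

namespace GrammarSystems

/-! Symbols: nonterminals are (encoded as) natural numbers, terminals come from `T`. -/

/-- A symbol is either a nonterminal (a natural number) or a terminal from `T`. -/
abbrev Sym (T : Type) := ℕ ⊕ T

/-- A sentential form: a word over `N ∪ Σ`. -/
abbrev Word (T : Type) := List (Sym T)

/-- A context-free production `A → y`. -/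
structure CFRule (T : Type) where
  lhs : ℕ
  rhs : Word T

/-- A production is erasing if its right-hand side is the empty word `λ`. -/
def CFRule.Erasing {T : Type} (r : CFRule T) : Prop := r.rhs = []

/-- One rewriting step `u = xAz ⇒ xyz = v` using the rule `r = A → y`. -/
def CFRule.Rewrites {T : Type} (r : CFRule T) (u v : Word T) : Prop :=
  ∃ x z : Word T, u = x ++ [Sum.inl r.lhs] ++ z ∧ v = x ++ r.rhs ++ z

/-- Ordinary one-step context-free derivation of a set (list) of productions. -/
def cfStep {T : Type} (P : List (CFRule T)) (u v : Word T) : Prop :=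
  ∃ r ∈ P, r.Rewrites u v

/-- `iter r n u v` : `u` derives `v` in exactly `n` steps of the relation `r`. -/
def iter {α : Type*} (r : α → α → Prop) : ℕ → α → α → Prop
  | 0 => Eq
  | n + 1 => fun u v => ∃ w, r u w ∧ iter r n w v

/-- The derivation modes of CD grammar systems: `≤ k`, `= k`, `≥ k`, `*` and `t`. -/
inductive Mode where
  | le (k : ℕ)
  | eq (k : ℕ)
  | ge (k : ℕ)
  | star
  | t

/-- The mode relation induced by a one-step derivation relation `r`. -/
def ModeRel {α : Type*} (r : α → α → Prop) : Mode → α → α → Prop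
  | .le k => fun u v => ∃ j, 1 ≤ j ∧ j ≤ k ∧ iter r j u v
  | .eq k => iter r k
  | .ge k => fun u v => ∃ j, k ≤ j ∧ iter r j u v
  | .star => Relation.ReflTransGen r
  | .t => fun u v => Relation.ReflTransGen r u v ∧ ∀ w, ¬ r v w

/-- A terminal word viewed as a sentential form. -/
def encodeWord {T : Type} (w : List T) : Word T := w.map Sum.inr

/-- The language generated from start symbol `S` by iterating the relation `step`. -/
def langOf {T : Type} (step : Word T → Word T → Prop) (S : ℕ) : Language T :=
  {w | Relation.ReflTransGen step [Sum.inl S] (encodeWord w)}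

/-! ### Ordered grammars and ordered CD grammar systems -/

/-- A component of an ordered CD grammar system: a finite set of context-free
productions together with a strict order (transitive and asymmetric) on rules. -/
structure OComponent (T : Type) where
  rules : List (CFRule T)
  gt : CFRule T → CFRule T → Prop
  gt_trans : ∀ {p q r}, gt p q → gt q r → gt p r
  gt_asymm : ∀ {p q}, gt p q → ¬ gt q p

/-- One-step derivation of an ordered grammar (component): apply a rule only if
no strictly greater rule has its left-hand side occurring in the sentential form. -/
def OComponent.Step {T : Type} (C : OComponent T) (u v : Word T) : Prop :=
  ∃ r ∈ C.rules, r.Rewrites u v ∧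
    ∀ r' ∈ C.rules, C.gt r' r → Sum.inl r'.lhs ∉ u

/-- A component has no erasing productions. -/
def OComponent.NonErasing {T : Type} (C : OComponent T) : Prop :=
  ∀ r ∈ C.rules, ¬ r.Erasing

/-- An ordered cooperating distributed grammar system (OCDGS). -/
structure OCDGS (T : Type) where
  comps : List (OComponent T)
  start : ℕ

/-- The derivation relation `⇒_{G,m}` of an OCDGS in mode `m`. -/
def OCDGS.SysStep {T : Type} (G : OCDGS T) (m : Mode) (u v : Word T) : Prop :=
  ∃ C ∈ G.comps, ModeRel C.Step m u v

/-- The language of an OCDGS in mode `m`. -/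
def OCDGS.lang {T : Type} (G : OCDGS T) (m : Mode) : Language T :=
  langOf (G.SysStep m) G.start

/-- An OCDGS without erasing productions. -/
def OCDGS.NonErasing {T : Type} (G : OCDGS T) : Prop :=
  ∀ C ∈ G.comps, C.NonErasing

/-- The class `OCD(m)`. -/
def OCD (T : Type) (m : Mode) : Set (Language T) :=
  {L | ∃ G : OCDGS T, L = G.lang m}

/-- The class `OCD^{-λ}(m)`. -/
def OCDne (T : Type) (m : Mode) : Set (Language T) :=
  {L | ∃ G : OCDGS T, G.NonErasing ∧ L = G.lang m}

/-- The class `OCDₙ(m)`: at most `n` components. -/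
def OCDbound (T : Type) (n : ℕ) (m : Mode) : Set (Language T) :=
  {L | ∃ G : OCDGS T, G.comps.length ≤ n ∧ L = G.lang m}

/-- The class `OCDₙ^{-λ}(m)`. -/
def OCDboundNE (T : Type) (n : ℕ) (m : Mode) : Set (Language T) :=
  {L | ∃ G : OCDGS T, G.comps.length ≤ n ∧ G.NonErasing ∧ L = G.lang m}

/-- The class `ORD` of languages of ordered grammars. -/
def ORD (T : Type) : Set (Language T) :=
  {L | ∃ (C : OComponent T) (S : ℕ), L = langOf C.Step S}

/-- The class `ORD^{-λ}`. -/
def ORDne (T : Type) : Set (Language T) :=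
  {L | ∃ (C : OComponent T) (S : ℕ), C.NonErasing ∧ L = langOf C.Step S}

/-! ### Forbidden random context grammars and CD grammar systems -/

/-- A forbidden random context rule `(A → y, F)`. -/
structure FRCRule (T : Type) where
  lhs : ℕ
  rhs : Word T
  forb : Finset ℕ

/-- One-step derivation of a forbidden random context grammar (component). -/
def frcStep {T : Type} (P : List (FRCRule T)) (u v : Word T) : Prop :=
  ∃ r ∈ P, (∃ x z : Word T, u = x ++ [Sum.inl r.lhs] ++ z ∧ v = x ++ r.rhs ++ z) ∧
    ∀ A ∈ r.forb, Sum.inl A ∉ u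

/-- A forbidden random context CD grammar system (fRCCDGS). -/
structure FRCCDGS (T : Type) where
  comps : List (List (FRCRule T))
  start : ℕ

/-- The derivation relation `⇒_{G,m}` of an fRCCDGS in mode `m`. -/
def FRCCDGS.SysStep {T : Type} (G : FRCCDGS T) (m : Mode) (u v : Word T) : Prop :=
  ∃ P ∈ G.comps, ModeRel (frcStep P) m u v

/-- The language of an fRCCDGS in mode `m`. -/
def FRCCDGS.lang {T : Type} (G : FRCCDGS T) (m : Mode) : Language T :=
  langOf (G.SysStep m) G.start

/-- An fRCCDGS without erasing productions. -/
def FRCCDGS.NonErasing {T : Type} (G : FRCCDGS T) : Prop :=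
  ∀ P ∈ G.comps, ∀ r ∈ P, r.rhs ≠ []

/-- The class `fRCCD(m)`. -/
def fRCCD (T : Type) (m : Mode) : Set (Language T) :=
  {L | ∃ G : FRCCDGS T, L = G.lang m}

/-- The class `fRCCD^{-λ}(m)`. -/
def fRCCDne (T : Type) (m : Mode) : Set (Language T) :=
  {L | ∃ G : FRCCDGS T, G.NonErasing ∧ L = G.lang m}

/-- The class `fRCCDₙ(m)`: at most `n` components. -/
def fRCCDbound (T : Type) (n : ℕ) (m : Mode) : Set (Language T) :=
  {L | ∃ G : FRCCDGS T, G.comps.length ≤ n ∧ L = G.lang m}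

/-- The class `fRCCDₙ^{-λ}(m)`. -/
def fRCCDboundNE (T : Type) (n : ℕ) (m : Mode) : Set (Language T) :=
  {L | ∃ G : FRCCDGS T, G.comps.length ≤ n ∧ G.NonErasing ∧ L = G.lang m}

/-- The class `fRC` of languages of single forbidden random context grammars. -/
def fRC (T : Type) : Set (Language T) :=
  {L | ∃ (P : List (FRCRule T)) (S : ℕ), L = langOf (frcStep P) S}

/-- The class `fRC^{-λ}`. -/
def fRCne (T : Type) : Set (Language T) :=
  {L | ∃ (P : List (FRCRule T)) (S : ℕ), (∀ r ∈ P, r.rhs ≠ []) ∧ L = langOf (frcStep P) S}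

/-! ### Graph-controlled grammars with appearance checking -/

/-- A rule of a graph-controlled grammar: a context-free production together with
a success field and a failure field (sets of labels). The label of a rule is its
index in the rule list, so the labeling is automatically injective. -/
structure GCRule (T : Type) where
  prod : CFRule T
  succ : Finset ℕ
  fail : Finset ℕ

/-- A graph-controlled grammar with appearance checking. -/
structure GCGrammar (T : Type) where
  rules : List (GCRule T)
  init : Finset ℕ
  final : Finset ℕ
  start : ℕ

/-- One-step derivation on configurations `(sentential form, label)`:
either the production of the current rule is applied and we move to a label of the
success field, or it is not applicable (its left-hand side does not occur) and we
move, without changing the sentential form, to a label of the failure field. -/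
def GCGrammar.Step {T : Type} (G : GCGrammar T) :
    (Word T × ℕ) → (Word T × ℕ) → Prop := fun c c' =>
  ∃ r, G.rules[c.2]? = some r ∧
    ((r.prod.Rewrites c.1 c'.1 ∧ c'.2 ∈ r.succ) ∨
     (Sum.inl r.prod.lhs ∉ c.1 ∧ c'.1 = c.1 ∧ c'.2 ∈ r.fail))

/-- The language of a graph-controlled grammar: terminal words reachable from
`(S, ℓ₀)` with `ℓ₀` initial, in at least one step, ending in a final label. -/
def GCGrammar.lang {T : Type} (G : GCGrammar T) : Language T :=
  {w | ∃ l₀ ∈ G.init, ∃ lf ∈ G.final,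
    Relation.TransGen G.Step ([Sum.inl G.start], l₀) (encodeWord w, lf)}

/-- A graph-controlled grammar without erasing productions. -/
def GCGrammar.NonErasing {T : Type} (G : GCGrammar T) : Prop :=
  ∀ r ∈ G.rules, r.prod.rhs ≠ []

/-- The class `GC_ac`. -/
def GCac (T : Type) : Set (Language T) :=
  {L | ∃ G : GCGrammar T, L = G.lang}

/-- The class `GC_ac^{-λ}`. -/
def GCacNE (T : Type) : Set (Language T) :=
  {L | ∃ G : GCGrammar T, G.NonErasing ∧ L = G.lang}

/-! ### Recursively enumerable languages -/

/-- The class `RE` of recursively enumerable languages over `T`: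
those whose membership predicate is computably enumerable. -/
def REclass (T : Type) [Primcodable T] : Set (Language T) :=
  {L | REPred (· ∈ L)}

/-! ### CD grammar systems with random context entry conditions -/

/-- A component of a CD grammar system with random context entry conditions:
a set of context-free productions with permitting set `perm` and forbidding set `forb`. -/
structure RCComponent (T : Type) where
  rules : List (CFRule T)
  perm : Finset ℕ
  forb : Finset ℕ

/-- `u ⇒ᵢ^{m,rc} v` for a component with random context entry conditions. -/
def RCComponent.Step {T : Type} (C : RCComponent T) (m : Mode) (u v : Word T) : Prop :=
  ModeRel (cfStep C.rules) m u v ∧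
    (∀ A ∈ C.perm, Sum.inl A ∈ u) ∧ (∀ A ∈ C.forb, Sum.inl A ∉ u)

/-- A CD grammar system with random context entry conditions. -/
structure RCCDGS (T : Type) where
  comps : List (RCComponent T)
  start : ℕ

/-- The derivation relation `⇒_{G,m,rc}`. -/
def RCCDGS.SysStep {T : Type} (G : RCCDGS T) (m : Mode) (u v : Word T) : Prop :=
  ∃ C ∈ G.comps, C.Step m u v

/-- The language `L(G, m, rc)`. -/
def RCCDGS.lang {T : Type} (G : RCCDGS T) (m : Mode) : Language T :=
  langOf (G.SysStep m) G.start

/-- No erasing productions. -/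
def RCCDGS.NonErasing {T : Type} (G : RCCDGS T) : Prop :=
  ∀ C ∈ G.comps, ∀ r ∈ C.rules, r.rhs ≠ []

/-- The class `CD(m, rc)`. -/
def CDrc (T : Type) (m : Mode) : Set (Language T) :=
  {L | ∃ G : RCCDGS T, L = G.lang m}

/-- The class `CD^{-λ}(m, rc)`. -/
def CDrcNE (T : Type) (m : Mode) : Set (Language T) :=
  {L | ∃ G : RCCDGS T, G.NonErasing ∧ L = G.lang m}

/-- The class `CD(m, frc)`: all permitting sets empty. -/
def CDfrc (T : Type) (m : Mode) : Set (Language T) :=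
  {L | ∃ G : RCCDGS T, (∀ C ∈ G.comps, C.perm = ∅) ∧ L = G.lang m}

/-- The class `CD^{-λ}(m, frc)`. -/
def CDfrcNE (T : Type) (m : Mode) : Set (Language T) :=
  {L | ∃ G : RCCDGS T, (∀ C ∈ G.comps, C.perm = ∅) ∧ G.NonErasing ∧ L = G.lang m}

/-- The class `CD(m)` of ordinary CD grammar systems: all context conditions empty. -/
def CD (T : Type) (m : Mode) : Set (Language T) :=
  {L | ∃ G : RCCDGS T, (∀ C ∈ G.comps, C.perm = ∅ ∧ C.forb = ∅) ∧ L = G.lang m}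

/-- The class `CD^{-λ}(m)`. -/
def CDne (T : Type) (m : Mode) : Set (Language T) :=
  {L | ∃ G : RCCDGS T, (∀ C ∈ G.comps, C.perm = ∅ ∧ C.forb = ∅) ∧ G.NonErasing ∧
    L = G.lang m}

/-! ### CD grammar systems with priorities -/

/-- A CD grammar system with priorities: components with a strict order
(transitive and asymmetric) on (indices of) components. -/
structure PCDGS (T : Type) where
  comps : List (List (CFRule T))
  gt : Fin comps.length → Fin comps.length → Prop
  gt_trans : ∀ {i j k}, gt i j → gt j k → gt i k
  gt_asymm : ∀ {i j}, gt i j → ¬ gt j i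

theorem PCDGS.gt_wf {T : Type} (G : PCDGS T) : WellFounded G.gt := by
  have h1 : IsTrans (Fin G.comps.length) G.gt := ⟨fun _ _ _ => G.gt_trans⟩
  have h2 : IsIrrefl (Fin G.comps.length) G.gt := ⟨fun _ h => G.gt_asymm h h⟩
  exact Finite.wellFounded_of_trans_of_irrefl G.gt

/-- Start symbol comes separately (so that `gt` can mention `comps.length`). -/
structure PCDGSs (T : Type) extends PCDGS T where
  start : ℕ

/-- `G.Enabled m i x` : component `i` can make a prioritized `m`-mode step from `x`,
defined by recursion along the (well-founded) strict order `>`: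
component `i` is enabled iff it can make an (unprioritized) `m`-step and no
component of higher priority is enabled. -/
def PCDGS.Enabled {T : Type} (G : PCDGS T) (m : Mode) :
    Fin G.comps.length → Word T → Prop :=
  G.gt_wf.fix (C := fun _ => Word T → Prop) fun i ih x =>
    (∃ z, ModeRel (cfStep (G.comps.get i)) m x z) ∧
    ∀ (j : Fin G.comps.length) (h : G.gt j i), ¬ ih j h x

/-- The prioritized derivation relation `⇒_{m,>}`: `u ⇒ᵢ^{m,>} v` iff `u ⇒ᵢ^{m} v`
and no component of strictly higher priority can make a prioritized `m`-step from `u`. -/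
def PCDGS.PStep {T : Type} (G : PCDGS T) (m : Mode) (u v : Word T) : Prop :=
  ∃ i : Fin G.comps.length,
    ModeRel (cfStep (G.comps.get i)) m u v ∧
    ∀ j : Fin G.comps.length, G.gt j i → ¬ G.Enabled m j u

/-- The language `L_m(G)` of a PCDGS. -/
def PCDGSs.lang {T : Type} (G : PCDGSs T) (m : Mode) : Language T :=
  langOf (G.toPCDGS.PStep m) G.start

/-- No erasing productions. -/
def PCDGSs.NonErasing {T : Type} (G : PCDGSs T) : Prop :=
  ∀ P ∈ G.comps, ∀ r ∈ P, r.rhs ≠ []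

/-- The class `PCD(m)`. -/
def PCD (T : Type) (m : Mode) : Set (Language T) :=
  {L | ∃ G : PCDGSs T, L = G.lang m}

/-- The class `PCD^{-λ}(m)`. -/
def PCDne (T : Type) (m : Mode) : Set (Language T) :=
  {L | ∃ G : PCDGSs T, G.NonErasing ∧ L = G.lang m}

end GrammarSystems

namespace CDCollapse
open GrammarSystems

variable {T : Type}

/-! ### iter lemmas -/

theorem iter_trans {α : Type*} {r : α → α → Prop} :
    ∀ {a b : ℕ} {u v w : α}, iter r a u v → iter r b v w → iter r (a + b) u w
  | 0, b, u, v, w, h1, h2 => by cases h1; simpa using h2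
  | a+1, b, u, v, w, h1, h2 => by
      obtain ⟨x, hx, h1⟩ := h1
      rw [Nat.succ_add]
      exact ⟨x, hx, iter_trans h1 h2⟩

theorem iter_succ_right {α : Type*} {r : α → α → Prop} :
    ∀ {n : ℕ} {u w : α}, iter r (n + 1) u w ↔ ∃ v, iter r n u v ∧ r v w := by
  intro n
  induction n with
  | zero => intro u w; constructor
            · rintro ⟨v, hv, h⟩; cases h; exact ⟨u, rfl, hv⟩
            · rintro ⟨v, hv, h⟩; cases hv; exact ⟨w, h, rfl⟩
  | succ n ih =>
      intro u w
      constructor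
      · rintro ⟨v, hv, h⟩
        obtain ⟨x, hx, hr⟩ := ih.1 h
        exact ⟨x, ⟨v, hv, hx⟩, hr⟩
      · rintro ⟨v, ⟨x, hx, hv⟩, hr⟩
        exact ⟨x, hx, ih.2 ⟨v, hv, hr⟩⟩

/-! ### list splitting lemmas -/

theorem single_eq_append_split {α : Type*} :
    ∀ {x : List α} {z x' z' : List α} {c : α},
      x ++ [c] ++ z = x' ++ [c] ++ z' → c ∉ x → c ∉ z → x = x' ∧ z = z'
  | [], z, x', z', c, h, hx, hz => by
      cases x' with
      | nil => simpa using h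
      | cons a xs =>
          simp only [List.nil_append, List.cons_append, List.cons.injEq] at h
          obtain ⟨rfl, h⟩ := h
          exact absurd (h ▸ (by simp : c ∈ xs ++ [c] ++ z')) hz
  | a :: xs, z, x', z', c, h, hx, hz => by
      cases x' with
      | nil =>
          simp only [List.nil_append, List.cons_append, List.cons.injEq] at h
          exact absurd (h.1 ▸ (List.mem_cons_self : a ∈ a :: xs)) hx
      | cons b xs' =>
          simp only [List.cons_append, List.cons.injEq] at h
          obtain ⟨rfl, h⟩ := h
          obtain ⟨h1, h2⟩ := single_eq_append_split h (fun hm => hx (List.mem_cons_of_mem _ hm)) hz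
          exact ⟨by rw [h1], h2⟩

theorem append_eq_single_split {α : Type*} :
    ∀ {y : List α} {d x z : List α} {s : α},
      y ++ d = x ++ [s] ++ z →
      (∃ y₁ y₂, y = y₁ ++ [s] ++ y₂ ∧ x = y₁ ∧ z = y₂ ++ d) ∨
      (∃ e, d = e ++ [s] ++ z ∧ x = y ++ e)
  | [], d, x, z, s, h => by
      right; exact ⟨x, by simpa using h, by simp⟩
  | a :: ys, d, x, z, s, h => by
      cases x with
      | nil =>
          simp only [List.cons_append, List.nil_append, List.cons.injEq] at h
          obtain ⟨rfl, h⟩ := h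
          exact Or.inl ⟨[], ys, by simp, rfl, h.symm⟩
      | cons b xs =>
          simp only [List.cons_append, List.cons.injEq] at h
          obtain ⟨rfl, h⟩ := h
          rcases append_eq_single_split h with ⟨y₁, y₂, h1, h2, h3⟩ | ⟨e, h1, h2⟩
          · exact Or.inl ⟨a :: y₁, y₂, by simp [h1], by simp [h2], h3⟩
          · exact Or.inr ⟨e, h1, by simp [h2]⟩

theorem three_split {α : Type*} {c y d x z : List α} {s : α}
    (h : c ++ y ++ d = x ++ [s] ++ z) :
    (∃ e, c = x ++ [s] ++ e ∧ z = e ++ y ++ d) ∨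
    (∃ y₁ y₂, y = y₁ ++ [s] ++ y₂ ∧ x = c ++ y₁ ∧ z = y₂ ++ d) ∨
    (∃ e, d = e ++ [s] ++ z ∧ x = c ++ y ++ e) := by
  rw [List.append_assoc] at h
  rcases append_eq_single_split h with ⟨c₁, c₂, h1, h2, h3⟩ | ⟨e, h1, h2⟩
  · exact Or.inl ⟨c₂, by rw [h1, h2], by rw [h3, List.append_assoc]⟩
  · rcases append_eq_single_split h1 with ⟨y₁, y₂, g1, g2, g3⟩ | ⟨f, g1, g2⟩
    · exact Or.inr (Or.inl ⟨y₁, y₂, g1, by rw [h2, g2], g3⟩)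
    · exact Or.inr (Or.inr ⟨f, g1, by rw [h2, g2, List.append_assoc]⟩)

theorem two_single_split {α : Type*} {x z c d : List α} {s t : α}
    (h : x ++ [s] ++ z = c ++ [t] ++ d) (hne : s ≠ t) :
    (∃ e, c = x ++ [s] ++ e ∧ z = e ++ [t] ++ d) ∨
    (∃ e, x = c ++ [t] ++ e ∧ d = e ++ [s] ++ z) := by
  rcases three_split (c := x) (y := [s]) (d := z) h with
    ⟨e, h1, h2⟩ | ⟨y₁, y₂, h1, h2, h3⟩ | ⟨e, h1, h2⟩
  · exact Or.inr ⟨e, h1, h2⟩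
  · exfalso
    cases y₁ with
    | nil =>
        simp only [List.nil_append, List.singleton_append, List.cons.injEq] at h1
        exact hne h1.1
    | cons a ys => simp at h1
  · exact Or.inl ⟨e, h2, h1⟩

noncomputable section

/-! ### States and encoding -/

inductive St where
  | idle
  | b (i s : ℕ)
  | cnt (i t : ℕ)
  | cint (i t s : ℕ)
  | fin (i s : ℕ)
deriving DecidableEq

def stCode : St → ℕ
  | .idle => Nat.pair 0 0
  | .b i s => Nat.pair 1 (Nat.pair i s)
  | .cnt i t => Nat.pair 2 (Nat.pair i t)
  | .cint i t s => Nat.pair 3 (Nat.pair i (Nat.pair t s))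
  | .fin i s => Nat.pair 4 (Nat.pair i s)

theorem stCode_inj {p q : St} (h : stCode p = stCode q) : p = q := by
  cases p <;> cases q <;> simp_all [stCode, Nat.pair_eq_pair]

theorem le_foldr_max : ∀ (l : List ℕ) (a : ℕ), a ∈ l → a ≤ l.foldr max 0
  | b :: l, a, h => by
      rcases List.mem_cons.1 h with rfl | h
      · exact le_max_left _ _
      · exact le_trans (le_foldr_max l a h) (le_max_right _ _)

def symNats : Sym T → List ℕ := fun s => match s with | .inl a => [a] | .inr _ => []

def wordNats (u : Word T) : List ℕ := u.flatMap symNats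

def boundList (G : RCCDGS T) : List ℕ :=
  G.start :: G.comps.flatMap fun C => C.forb.toList ++ C.rules.flatMap fun r => r.lhs :: wordNats r.rhs

def MB (G : RCCDGS T) : ℕ := (boundList G).foldr max 0 + 1

theorem lt_MB {G : RCCDGS T} {a : ℕ} (h : a ∈ boundList G) : a < MB G :=
  Nat.lt_succ_of_le (le_foldr_max _ _ h)

def enc (G : RCCDGS T) (A : ℕ) (q : St) : ℕ := MB G + Nat.pair A (stCode q)

theorem MB_le_enc (G : RCCDGS T) (A : ℕ) (q : St) : MB G ≤ enc G A q := Nat.le_add_right _ _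

theorem enc_inj {G : RCCDGS T} {A A' : ℕ} {q q' : St} (h : enc G A q = enc G A' q') :
    A = A' ∧ q = q' := by
  have h' : Nat.pair A (stCode q) = Nat.pair A' (stCode q') := by
    unfold enc at h; omega
  rw [Nat.pair_eq_pair] at h'
  exact ⟨h'.1, stCode_inj h'.2⟩

def msym (G : RCCDGS T) (A : ℕ) (q : St) : Sym T := Sum.inl (enc G A q)

def MkF (G : RCCDGS T) (q : St) (x : Word T) (A : ℕ) (z : Word T) : Word T :=
  x ++ [msym G A q] ++ z

def markings (G : RCCDGS T) (q : St) : Word T → List (Word T)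
  | [] => []
  | s :: ys =>
      (match s with
       | Sum.inl B => [msym G B q :: ys]
       | Sum.inr _ => []) ++ (markings G q ys).map (s :: ·)

theorem markings_mem_of (G : RCCDGS T) (q : St) :
    ∀ (x : Word T) (B : ℕ) (z : Word T),
      x ++ [msym G B q] ++ z ∈ markings G q (x ++ [Sum.inl B] ++ z)
  | [], B, z => by simp [markings]
  | s :: xs, B, z => by
      simp only [List.cons_append, markings, List.mem_append, List.mem_map]
      exact Or.inr ⟨_, markings_mem_of G q xs B z, rfl⟩

theorem mem_markings {G : RCCDGS T} {q : St} :
    ∀ {y w : Word T}, w ∈ markings G q y →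
      ∃ x B z, y = x ++ [Sum.inl B] ++ z ∧ w = x ++ [msym G B q] ++ z := by
  intro y
  induction y with
  | nil => intro w h; simp [markings] at h
  | cons s ys ih =>
      intro w h
      simp only [markings, List.mem_append, List.mem_map] at h
      rcases h with h | ⟨w', hw', rfl⟩
      · match s, h with
        | Sum.inl B, h =>
            rw [List.mem_singleton] at h
            exact ⟨[], B, ys, rfl, by simp [h]⟩
      · obtain ⟨x, B', z, h1, h2⟩ := ih hw'
        exact ⟨s :: x, B', z, by simp [h1], by simp [h2]⟩

/-! ### The simulating grammar system -/

def nn (G : RCCDGS T) : ℕ := G.comps.length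

def Pi (G : RCCDGS T) (i : ℕ) : List (CFRule T) := (G.comps.getD i ⟨[], ∅, ∅⟩).rules

def Fi (G : RCCDGS T) (i : ℕ) : Finset ℕ := (G.comps.getD i ⟨[], ∅, ∅⟩).forb

def chainRules (G : RCCDGS T) (p : ℕ → St) (L : ℕ) : List (CFRule T) :=
  (List.range L).flatMap fun s => (List.range (MB G)).map fun A =>
    ⟨enc G A (p s), [msym G A (p (s+1))]⟩

def bPath (j i : ℕ) : ℕ → St := fun s =>
  if s = 0 then .idle else if s < j then .b i s else .cnt i 1

def dPath (k j i t : ℕ) : ℕ → St := fun s =>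
  if s = 0 then .cnt i t else if s < j - 1 then .cint i t s
  else if t = k then .idle else .cnt i (t + 1)

def fPath (k i : ℕ) : ℕ → St := fun s => if s = 0 then .cnt i k else .fin i s

def markedRules (G : RCCDGS T) (P : List (CFRule T)) (q : St) : List (CFRule T) :=
  P.flatMap fun r => (markings G q r.rhs).map fun w => ⟨enc G r.lhs q, w⟩

def termRules (G : RCCDGS T) (j : ℕ) (P : List (CFRule T)) (i : ℕ) : List (CFRule T) :=
  (P.filter fun r => r.rhs.all Sum.isRight).map fun r => ⟨enc G r.lhs (.fin i (j - 1)), r.rhs⟩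

def allStL (G : RCCDGS T) (k j : ℕ) : List St :=
  .idle :: (List.range (nn G)).flatMap fun i =>
    ((List.range (j + 1)).map fun s => .b i s) ++
    ((List.range (k + 2)).map fun t => .cnt i t) ++
    ((List.range (k + 2)).flatMap fun t => (List.range (j + 1)).map fun s => .cint i t s) ++
    ((List.range (j + 1)).map fun s => .fin i s)

def forbMarks (G : RCCDGS T) (k j : ℕ) (allow : List St) : Finset ℕ :=
  ((allStL G k j).filter (· ∉ allow)).toFinset.biUnion fun q =>
    (Finset.range (MB G)).image fun A => enc G A q

def Bcomp (G : RCCDGS T) (k j i : ℕ) : RCComponent T :=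
  ⟨chainRules G (bPath j i) j, ∅,
    Fi G i ∪ (Fi G i).image (fun A => enc G A .idle) ∪ forbMarks G k j [.idle]⟩

def dAllow (j i t : ℕ) : List St := .cnt i t :: (List.range (j + 1)).map fun s => .cint i t s

def Dcomp (G : RCCDGS T) (k j i t : ℕ) : RCComponent T :=
  ⟨Pi G i ++ markedRules G (Pi G i) (.cnt i t) ++ chainRules G (dPath k j i t) (j - 1), ∅,
    forbMarks G k j (dAllow j i t)⟩

def Fincomp (G : RCCDGS T) (k j i : ℕ) : RCComponent T :=
  ⟨chainRules G (fPath k i) (j - 1) ++ termRules G j (Pi G i) i, ∅,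
    Finset.range (MB G) ∪ forbMarks G k j [.cnt i k]⟩

def simG (G : RCCDGS T) (k j : ℕ) : RCCDGS T :=
  ⟨(List.range (nn G)).flatMap fun i =>
      Bcomp G k j i :: Fincomp G k j i :: ((List.range k).map fun t' => Dcomp G k j i (t' + 1)),
    enc G G.start .idle⟩

theorem mem_simG_comps {G : RCCDGS T} {k j : ℕ} {C : RCComponent T} :
    C ∈ (simG G k j).comps ↔ ∃ i < nn G,
      C = Bcomp G k j i ∨ C = Fincomp G k j i ∨ ∃ t, 1 ≤ t ∧ t ≤ k ∧ C = Dcomp G k j i t := by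
  simp only [simG, List.mem_flatMap, List.mem_range, List.mem_cons, List.mem_map]
  constructor
  · rintro ⟨i, hi, h | h | ⟨t', ht', rfl⟩⟩
    · exact ⟨i, hi, Or.inl h⟩
    · exact ⟨i, hi, Or.inr (Or.inl h)⟩
    · exact ⟨i, hi, Or.inr (Or.inr ⟨t' + 1, by omega, by omega, rfl⟩)⟩
  · rintro ⟨i, hi, h | h | ⟨t, ht1, ht2, rfl⟩⟩
    · exact ⟨i, hi, Or.inl h⟩
    · exact ⟨i, hi, Or.inr (Or.inl h)⟩
    · exact ⟨i, hi, Or.inr (Or.inr ⟨t - 1, by omega, by congr 1; omega⟩)⟩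

theorem simG_perm {G : RCCDGS T} {k j : ℕ} : ∀ C ∈ (simG G k j).comps, C.perm = ∅ := by
  intro C hC
  rcases mem_simG_comps.1 hC with ⟨i, _, rfl | rfl | ⟨t, _, _, rfl⟩⟩ <;> rfl

/-! ### Bounds -/

theorem mem_wordNats {a : ℕ} : ∀ {u : Word T}, a ∈ wordNats u ↔ Sum.inl a ∈ u
  | [] => by simp [wordNats]
  | s :: ys => by
      rw [show wordNats (s :: ys) = symNats s ++ wordNats ys from List.flatMap_cons ..]
      rw [List.mem_append, mem_wordNats (u := ys), List.mem_cons]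
      cases s with
      | inl b => simp [symNats, eq_comm]
      | inr c => simp [symNats]

theorem comp_mem {G : RCCDGS T} {i : ℕ} (hi : i < nn G) :
    G.comps.getD i ⟨[], ∅, ∅⟩ ∈ G.comps := by
  rw [List.getD_eq_getElem _ _ hi]
  exact List.getElem_mem _

theorem start_lt_MB (G : RCCDGS T) : G.start < MB G := lt_MB (by simp [boundList])

theorem lhs_lt_MB {G : RCCDGS T} {i : ℕ} (hi : i < nn G) {r : CFRule T} (hr : r ∈ Pi G i) :
    r.lhs < MB G := by
  apply lt_MB
  simp only [boundList, List.mem_cons, List.mem_flatMap, List.mem_append]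
  exact Or.inr ⟨_, comp_mem hi, Or.inr ⟨r, hr, Or.inl rfl⟩⟩

theorem rhs_lt_MB {G : RCCDGS T} {i : ℕ} (hi : i < nn G) {r : CFRule T} (hr : r ∈ Pi G i)
    {a : ℕ} (ha : Sum.inl a ∈ r.rhs) : a < MB G := by
  apply lt_MB
  simp only [boundList, List.mem_cons, List.mem_flatMap, List.mem_append]
  exact Or.inr ⟨_, comp_mem hi, Or.inr ⟨r, hr, Or.inr (mem_wordNats.2 ha)⟩⟩

theorem forb_lt_MB {G : RCCDGS T} {i : ℕ} (hi : i < nn G) {a : ℕ} (ha : a ∈ Fi G i) :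
    a < MB G := by
  apply lt_MB
  simp only [boundList, List.mem_cons, List.mem_flatMap, List.mem_append]
  exact Or.inr ⟨_, comp_mem hi, Or.inl (by simpa [Fi] using ha)⟩

/-! ### Low words -/

def Lo (G : RCCDGS T) (u : Word T) : Prop := ∀ a : ℕ, Sum.inl a ∈ u → a < MB G

theorem Lo_append {G : RCCDGS T} {u v : Word T} : Lo G (u ++ v) ↔ Lo G u ∧ Lo G v := by
  constructor
  · exact fun h => ⟨fun a ha => h a (by simp [ha]), fun a ha => h a (by simp [ha])⟩
  · rintro ⟨h1, h2⟩ a ha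
    rcases List.mem_append.1 ha with h | h
    · exact h1 a h
    · exact h2 a h

theorem Lo_rhs {G : RCCDGS T} {i : ℕ} (hi : i < nn G) {r : CFRule T} (hr : r ∈ Pi G i) :
    Lo G r.rhs := fun _ ha => rhs_lt_MB hi hr ha

theorem not_mem_of_Lo {G : RCCDGS T} {u : Word T} (h : Lo G u) {A : ℕ} {q : St} :
    msym G A q ∉ u := fun hm => absurd (h _ hm) (not_lt.2 (MB_le_enc G A q))

def PureW (u : Word T) : Prop := ∀ a : ℕ, Sum.inl a ∉ u

theorem PureW_append {u v : Word T} : PureW (u ++ v) ↔ PureW u ∧ PureW v := by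
  constructor
  · exact fun h => ⟨fun a ha => h a (by simp [ha]), fun a ha => h a (by simp [ha])⟩
  · rintro ⟨h1, h2⟩ a ha
    rcases List.mem_append.1 ha with h | h
    · exact h1 a h
    · exact h2 a h

theorem PureW_encodeWord (w : List T) : PureW (encodeWord w) := by
  intro a ha
  simp [encodeWord] at ha

theorem PureW_of_all_isRight {y : Word T} (h : y.all Sum.isRight) : PureW y := by
  intro a ha
  have := List.all_eq_true.1 h _ ha
  simp at this

theorem PureW.lo {G : RCCDGS T} {u : Word T} (h : PureW u) : Lo G u :=
  fun a ha => absurd ha (h a)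

theorem no_step_of_PureW {P : List (CFRule T)} {u β : Word T} (h : PureW u) :
    ¬ cfStep P u β := by
  rintro ⟨r, _, c, d, rfl, -⟩
  exact h r.lhs (by simp)

theorem iter_pure {P : List (CFRule T)} {u β : Word T} {m : ℕ} (h : PureW u)
    (hit : iter (cfStep P) m u β) : m = 0 ∧ β = u := by
  cases m with
  | zero => exact ⟨rfl, hit.symm⟩
  | succ m => obtain ⟨v, hv, -⟩ := hit; exact absurd hv (no_step_of_PureW h)

/-! ### Membership in forbidding sets -/

theorem mem_allStL_cnt {G : RCCDGS T} {k j i t : ℕ} (hi : i < nn G) (ht : t ≤ k + 1) :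
    (.cnt i t : St) ∈ allStL G k j := by
  unfold allStL
  refine List.mem_cons_of_mem _ (List.mem_flatMap.2 ⟨i, List.mem_range.2 hi, ?_⟩)
  simp only [List.mem_append, List.mem_map, List.mem_range, List.mem_flatMap]
  exact Or.inl (Or.inl (Or.inr ⟨t, by omega, rfl⟩))

theorem mem_allStL_cint {G : RCCDGS T} {k j i t s : ℕ} (hi : i < nn G) (ht : t ≤ k + 1)
    (hs : s ≤ j) : (.cint i t s : St) ∈ allStL G k j := by
  unfold allStL
  refine List.mem_cons_of_mem _ (List.mem_flatMap.2 ⟨i, List.mem_range.2 hi, ?_⟩)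
  simp only [List.mem_append, List.mem_map, List.mem_range, List.mem_flatMap]
  exact Or.inl (Or.inr ⟨t, by omega, s, by omega, rfl⟩)

theorem mem_allStL_idle {G : RCCDGS T} {k j : ℕ} : (.idle : St) ∈ allStL G k j := by
  simp [allStL]

theorem mem_forbMarks_iff {G : RCCDGS T} {k j : ℕ} {allow : List St} {c : ℕ} :
    c ∈ forbMarks G k j allow ↔
      ∃ q ∈ allStL G k j, q ∉ allow ∧ ∃ A < MB G, c = enc G A q := by
  simp only [forbMarks, Finset.mem_biUnion, List.mem_toFinset, List.mem_filter,
    Finset.mem_image, Finset.mem_range, decide_eq_true_eq]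
  constructor
  · rintro ⟨q, ⟨hq1, hq2⟩, A, hA, rfl⟩
    exact ⟨q, hq1, hq2, A, hA, rfl⟩
  · rintro ⟨q, hq1, hq2, A, hA, rfl⟩
    exact ⟨q, ⟨hq1, hq2⟩, A, hA, rfl⟩

theorem enc_mem_forbMarks_iff {G : RCCDGS T} {k j : ℕ} {allow : List St} {A : ℕ} {q : St} :
    enc G A q ∈ forbMarks G k j allow ↔ A < MB G ∧ q ∈ allStL G k j ∧ q ∉ allow := by
  rw [mem_forbMarks_iff]
  constructor
  · rintro ⟨q', hq1, hq2, A', hA', he⟩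
    obtain ⟨rfl, rfl⟩ := enc_inj he
    exact ⟨hA', hq1, hq2⟩
  · rintro ⟨hA, hq1, hq2⟩
    exact ⟨q, hq1, hq2, A, hA, rfl⟩

theorem MB_le_of_mem_forbMarks {G : RCCDGS T} {k j : ℕ} {allow : List St} {c : ℕ}
    (h : c ∈ forbMarks G k j allow) : MB G ≤ c := by
  obtain ⟨q, -, -, A, -, rfl⟩ := mem_forbMarks_iff.1 h
  exact MB_le_enc G A q

/-! ### Decomposition around the mark -/

theorem mark_decomp {G : RCCDGS T} {x z c d : Word T} {A A' : ℕ} {q q' : St}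
    (hx : Lo G x) (hz : Lo G z)
    (h : x ++ [msym G A q] ++ z = c ++ [Sum.inl (enc G A' q')] ++ d) :
    A' = A ∧ q' = q ∧ c = x ∧ d = z := by
  by_cases he : (Sum.inl (enc G A' q') : Sym T) = msym G A q
  · obtain ⟨h1, h2⟩ := enc_inj (Sum.inl.inj he)
    rw [he] at h
    obtain ⟨he1, he2⟩ := single_eq_append_split h (not_mem_of_Lo hx) (not_mem_of_Lo hz)
    exact ⟨h1, h2, he1.symm, he2.symm⟩
  · exfalso
    rcases two_single_split h (Ne.symm he) with ⟨e, -, hzz⟩ | ⟨e, hxx, -⟩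
    · exact absurd (hz _ (by rw [hzz]; simp)) (not_lt.2 (MB_le_enc G A' q'))
    · exact absurd (hx _ (by rw [hxx]; simp)) (not_lt.2 (MB_le_enc G A' q'))

/-! ### Path injectivity -/

theorem bPath_inj {j i : ℕ} {a b : ℕ} (ha : a ≤ j) (hb : b ≤ j)
    (h : bPath j i a = bPath j i b) : a = b := by
  unfold bPath at h
  split_ifs at h <;> simp_all <;> omega

theorem dPath_inj {k j i t : ℕ} {a b : ℕ} (ha : a ≤ j - 1) (hb : b ≤ j - 1)
    (h : dPath k j i t a = dPath k j i t b) : a = b := by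
  unfold dPath at h
  split_ifs at h <;> simp_all <;> omega

theorem fPath_inj {k i : ℕ} {a b : ℕ} (h : fPath k i a = fPath k i b) : a = b := by
  unfold fPath at h
  split_ifs at h <;> simp_all

/-! ### Rule membership -/

theorem mem_chainRules_iff {G : RCCDGS T} {p : ℕ → St} {L : ℕ} {r : CFRule T} :
    r ∈ chainRules G p L ↔
      ∃ s < L, ∃ A < MB G, r = ⟨enc G A (p s), [msym G A (p (s + 1))]⟩ := by
  simp only [chainRules, List.mem_flatMap, List.mem_range, List.mem_map]
  constructor
  · rintro ⟨s, hs, A, hA, rfl⟩; exact ⟨s, hs, A, hA, rfl⟩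
  · rintro ⟨s, hs, A, hA, rfl⟩; exact ⟨s, hs, A, hA, rfl⟩

theorem mem_markedRules_iff {G : RCCDGS T} {P : List (CFRule T)} {q : St} {r' : CFRule T} :
    r' ∈ markedRules G P q ↔
      ∃ r ∈ P, ∃ w ∈ markings G q r.rhs, r' = ⟨enc G r.lhs q, w⟩ := by
  simp only [markedRules, List.mem_flatMap, List.mem_map]
  constructor
  · rintro ⟨r, hr, w, hw, rfl⟩; exact ⟨r, hr, w, hw, rfl⟩
  · rintro ⟨r, hr, w, hw, rfl⟩; exact ⟨r, hr, w, hw, rfl⟩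

theorem mem_termRules_iff {G : RCCDGS T} {P : List (CFRule T)} {i jj : ℕ} {r' : CFRule T} :
    r' ∈ termRules G jj P i ↔
      ∃ r ∈ P, r.rhs.all Sum.isRight ∧ r' = ⟨enc G r.lhs (.fin i (jj - 1)), r.rhs⟩ := by
  simp only [termRules, List.mem_map, List.mem_filter]
  constructor
  · rintro ⟨r, ⟨hr, hterm⟩, rfl⟩; exact ⟨r, hr, hterm, rfl⟩
  · rintro ⟨r, hr, hterm, rfl⟩; exact ⟨r, ⟨hr, hterm⟩, rfl⟩

/-! ### Chain construction -/

theorem chain_iter {G : RCCDGS T} {p : ℕ → St} {L : ℕ} {x z : Word T} {A : ℕ}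
    (hA : A < MB G) {P : List (CFRule T)} (hsub : ∀ r ∈ chainRules G p L, r ∈ P) :
    ∀ b {a : ℕ}, a + b ≤ L →
      iter (cfStep P) b (MkF G (p a) x A z) (MkF G (p (a + b)) x A z)
  | 0, a, _ => rfl
  | b + 1, a, hab => by
      refine ⟨MkF G (p (a + 1)) x A z, ⟨⟨enc G A (p a), [msym G A (p (a + 1))]⟩,
        hsub _ (mem_chainRules_iff.2 ⟨a, by omega, A, hA, rfl⟩), x, z, rfl, rfl⟩, ?_⟩
      have h2 := chain_iter (x := x) (z := z) hA hsub b (a := a + 1) (by omega)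
      rw [show a + (b + 1) = a + 1 + b by omega]
      exact h2

/-! ### Analysis of a step of a D-component -/

theorem stepD {G : RCCDGS T} {k j i t : ℕ} (hi : i < nn G) (hj : 2 ≤ j)
    {x z : Word T} {A ρ : ℕ} (hx : Lo G x) (hz : Lo G z) (hA : A < MB G) (hρ : ρ ≤ j - 1)
    {β : Word T} (h : cfStep (Dcomp G k j i t).rules (MkF G (dPath k j i t ρ) x A z) β) :
    ∃ x' A' z' ρ', β = MkF G (dPath k j i t ρ') x' A' z' ∧ Lo G x' ∧ Lo G z' ∧
      A' < MB G ∧ ρ' ≤ j - 1 ∧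
      ((ρ' = ρ ∧ cfStep (Pi G i) (x ++ [Sum.inl A] ++ z) (x' ++ [Sum.inl A'] ++ z')) ∨
       (ρ' = ρ + 1 ∧ x' = x ∧ z' = z ∧ A' = A)) := by
  obtain ⟨r, hr, c, d, hu, hβ⟩ := h
  rcases List.mem_append.1 hr with hr' | hr'
  · rcases List.mem_append.1 hr' with hr'' | hr''
    · -- unmarked rule of Pi G i
      have hlhs : (Sum.inl r.lhs : Sym T) ≠ msym G A (dPath k j i t ρ) := by
        intro hcon
        exact absurd (Sum.inl.inj hcon ▸ lhs_lt_MB hi hr'') (not_lt.2 (MB_le_enc _ _ _))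
      rcases two_single_split (hu : x ++ _ ++ z = c ++ [Sum.inl r.lhs] ++ d)
          (Ne.symm hlhs) with ⟨e, hc, hzz⟩ | ⟨e, hxx, hd⟩
      · -- occurrence inside z
        refine ⟨x, A, e ++ r.rhs ++ d, ρ, ?_, hx, ?_, hA, hρ, Or.inl ⟨rfl, ?_⟩⟩
        · rw [hβ, hc]; simp [MkF]
        · have h3 := Lo_append.1 (hzz ▸ hz)
          exact Lo_append.2 ⟨Lo_append.2 ⟨(Lo_append.1 h3.1).1, Lo_rhs hi hr''⟩, h3.2⟩
        · exact ⟨r, hr'', x ++ [Sum.inl A] ++ e, d, by rw [hzz]; simp, by simp⟩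
      · -- occurrence inside x
        refine ⟨c ++ r.rhs ++ e, A, z, ρ, ?_, ?_, hz, hA, hρ, Or.inl ⟨rfl, ?_⟩⟩
        · rw [hβ, hd]; simp [MkF]
        · have h3 := Lo_append.1 (hxx ▸ hx)
          exact Lo_append.2 ⟨Lo_append.2 ⟨(Lo_append.1 h3.1).1, Lo_rhs hi hr''⟩, h3.2⟩
        · exact ⟨r, hr'', c, e ++ [Sum.inl A] ++ z, by rw [hxx]; simp, by simp⟩
    · -- marked rule
      obtain ⟨r₀, hr₀, w, hw, rfl⟩ := mem_markedRules_iff.1 hr''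
      obtain ⟨rfl, hq, rfl, rfl⟩ := mark_decomp hx hz hu
      obtain ⟨w₁, B, w₂, hy, hwm⟩ := mem_markings hw
      refine ⟨c ++ w₁, B, w₂ ++ d, ρ, ?_, ?_, ?_, ?_, hρ, Or.inl ⟨rfl, ?_⟩⟩
      · rw [hβ]
        show c ++ w ++ d = _
        rw [hwm, ← hq]; simp [MkF]
      · exact Lo_append.2 ⟨hx, (Lo_append.1 (Lo_append.1 (hy ▸ Lo_rhs hi hr₀)).1).1⟩
      · exact Lo_append.2 ⟨(Lo_append.1 (hy ▸ Lo_rhs hi hr₀)).2, hz⟩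
      · exact rhs_lt_MB hi hr₀ (by rw [hy]; simp)
      · exact ⟨r₀, hr₀, c, d, rfl, by rw [hy]; simp⟩
  · -- chain rule
    obtain ⟨s, hs, A', hA', rfl⟩ := mem_chainRules_iff.1 hr'
    obtain ⟨rfl, hq, rfl, rfl⟩ := mark_decomp hx hz hu
    have hsρ : s = ρ := dPath_inj (by omega) hρ hq
    subst hsρ
    exact ⟨c, A', d, s + 1, by rw [hβ]; rfl, hx, hz, hA', by omega,
      Or.inr ⟨rfl, rfl, rfl, rfl⟩⟩

theorem runD {G : RCCDGS T} {k j i t : ℕ} (hi : i < nn G) (hj : 2 ≤ j) :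
    ∀ {m : ℕ} {x z : Word T} {A ρ : ℕ} {β : Word T},
      iter (cfStep (Dcomp G k j i t).rules) m (MkF G (dPath k j i t ρ) x A z) β →
      Lo G x → Lo G z → A < MB G → ρ ≤ j - 1 →
      ∃ ρ' x' A' z' a, β = MkF G (dPath k j i t ρ') x' A' z' ∧ Lo G x' ∧ Lo G z' ∧
        A' < MB G ∧ ρ ≤ ρ' ∧ ρ' ≤ j - 1 ∧ a + (ρ' - ρ) = m ∧
        iter (cfStep (Pi G i)) a (x ++ [Sum.inl A] ++ z) (x' ++ [Sum.inl A'] ++ z')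
  | 0, x, z, A, ρ, β, hit, hx, hz, hA, hρ => by
      cases hit
      exact ⟨ρ, x, A, z, 0, rfl, hx, hz, hA, le_refl _, hρ, by omega, rfl⟩
  | m + 1, x, z, A, ρ, β, hit, hx, hz, hA, hρ => by
      obtain ⟨γ, hstep, hit'⟩ := hit
      obtain ⟨x₁, A₁, z₁, ρ₁, rfl, hx₁, hz₁, hA₁, hρ₁, hcase⟩ :=
        stepD hi hj hx hz hA hρ hstep
      obtain ⟨ρ', x', A', z', a, rfl, hx', hz', hA', hle1, hle2, hcount, hiter⟩ :=
        runD hi hj hit' hx₁ hz₁ hA₁ hρ₁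
      rcases hcase with ⟨rfl, hstep'⟩ | ⟨hρeq, rfl, rfl, rfl⟩
      · exact ⟨ρ', x', A', z', a + 1, rfl, hx', hz', hA', hle1, hle2, by omega,
          ⟨_, hstep', hiter⟩⟩
      · exact ⟨ρ', x', A', z', a, rfl, hx', hz', hA', by omega, hle2, by omega, hiter⟩

/-! ### Analysis of B-components and Fin-components -/

theorem stepB {G : RCCDGS T} {k j i : ℕ} {x z : Word T} {A σ : ℕ} {β : Word T}
    (hx : Lo G x) (hz : Lo G z) (hσ : σ ≤ j)
    (h : cfStep (Bcomp G k j i).rules (MkF G (bPath j i σ) x A z) β) :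
    σ < j ∧ β = MkF G (bPath j i (σ + 1)) x A z := by
  obtain ⟨r, hr, c, d, hu, hβ⟩ := h
  obtain ⟨s, hs, A', hA', rfl⟩ := mem_chainRules_iff.1 hr
  obtain ⟨rfl, hq, rfl, rfl⟩ := mark_decomp hx hz hu
  have hsσ : s = σ := bPath_inj (by omega) hσ hq
  subst hsσ
  exact ⟨hs, by rw [hβ]; rfl⟩

theorem runB {G : RCCDGS T} {k j i : ℕ} {x z : Word T} {A : ℕ}
    (hx : Lo G x) (hz : Lo G z) :
    ∀ {m σ : ℕ} {β : Word T},
      iter (cfStep (Bcomp G k j i).rules) m (MkF G (bPath j i σ) x A z) β → σ ≤ j →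
      m + σ ≤ j ∧ β = MkF G (bPath j i (σ + m)) x A z
  | 0, σ, β, hit, hσ => by cases hit; exact ⟨by omega, rfl⟩
  | m + 1, σ, β, hit, hσ => by
      obtain ⟨γ, hstep, hit'⟩ := hit
      obtain ⟨hlt, rfl⟩ := stepB hx hz hσ hstep
      obtain ⟨h1, h2⟩ := runB hx hz hit' (by omega)
      refine ⟨by omega, ?_⟩
      rw [show σ + (m + 1) = σ + 1 + m by omega]
      exact h2

theorem stepF {G : RCCDGS T} {k j i : ℕ} (hi : i < nn G) (hj : 2 ≤ j)
    {x z : Word T} {A ρ : ℕ} {β : Word T}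
    (hx : PureW x) (hz : PureW z) (hρ : ρ ≤ j - 1)
    (h : cfStep (Fincomp G k j i).rules (MkF G (fPath k i ρ) x A z) β) :
    (ρ < j - 1 ∧ β = MkF G (fPath k i (ρ + 1)) x A z) ∨
    (ρ = j - 1 ∧ ∃ r ∈ Pi G i, r.lhs = A ∧ r.rhs.all Sum.isRight ∧ β = x ++ r.rhs ++ z) := by
  obtain ⟨r, hr, c, d, hu, hβ⟩ := h
  rcases List.mem_append.1 hr with hr' | hr'
  · obtain ⟨s, hs, A', hA', rfl⟩ := mem_chainRules_iff.1 hr'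
    obtain ⟨rfl, hq, rfl, rfl⟩ := mark_decomp (PureW.lo hx) (PureW.lo hz) hu
    have hsρ : s = ρ := fPath_inj hq
    subst hsρ
    exact Or.inl ⟨hs, by rw [hβ]; rfl⟩
  · obtain ⟨r₀, hr₀, hterm, rfl⟩ := mem_termRules_iff.1 hr'
    obtain ⟨rfl, hq, rfl, rfl⟩ := mark_decomp (PureW.lo hx) (PureW.lo hz) hu
    have hρeq : ρ = j - 1 := by
      unfold fPath at hq
      split_ifs at hq <;> simp_all
    exact Or.inr ⟨hρeq, r₀, hr₀, rfl, hterm, by rw [hβ]⟩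

theorem runF {G : RCCDGS T} {k j i : ℕ} (hi : i < nn G) (hj : 2 ≤ j) :
    ∀ {m : ℕ} {x z : Word T} {A ρ : ℕ} {β : Word T},
      iter (cfStep (Fincomp G k j i).rules) m (MkF G (fPath k i ρ) x A z) β →
      PureW x → PureW z → ρ ≤ j - 1 →
      (m + ρ ≤ j - 1 ∧ β = MkF G (fPath k i (ρ + m)) x A z) ∨
      (m + ρ = j ∧ ∃ r ∈ Pi G i, r.lhs = A ∧ r.rhs.all Sum.isRight ∧ β = x ++ r.rhs ++ z)
  | 0, x, z, A, ρ, β, hit, hx, hz, hρ => by cases hit; exact Or.inl ⟨by omega, rfl⟩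
  | m + 1, x, z, A, ρ, β, hit, hx, hz, hρ => by
      obtain ⟨γ, hstep, hit'⟩ := hit
      rcases stepF hi hj hx hz hρ hstep with ⟨hlt, rfl⟩ | ⟨hρeq, r₀, hr₀, hlhs, hterm, rfl⟩
      · rcases runF hi hj hit' hx hz (by omega) with ⟨h1, h2⟩ | ⟨h1, h2⟩
        · refine Or.inl ⟨by omega, ?_⟩
          rw [show ρ + (m + 1) = ρ + 1 + m by omega]
          exact h2
        · refine Or.inr ⟨by omega, ?_⟩
          obtain ⟨r, hr, h3, h4, h5⟩ := h2
          exact ⟨r, hr, h3, h4, h5⟩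
      · have hpure : PureW (x ++ r₀.rhs ++ z) :=
          PureW_append.2 ⟨PureW_append.2 ⟨hx, PureW_of_all_isRight hterm⟩, hz⟩
        obtain ⟨rfl, rfl⟩ := iter_pure hpure hit'
        exact Or.inr ⟨by omega, r₀, hr₀, hlhs, hterm, rfl⟩

theorem no_run_of_pure {P : List (CFRule T)} {u v : Word T} {jj : ℕ} (hj : 1 ≤ jj)
    (hu : PureW u) (h : ModeRel (cfStep P) (.ge jj) u v) : False := by
  obtain ⟨m, hm, hit⟩ := h
  obtain ⟨rfl, -⟩ := iter_pure hu hit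
  omega

/-! ### The soundness invariant -/

def Reaches (G : RCCDGS T) (k : ℕ) (v : Word T) : Prop :=
  Relation.ReflTransGen (G.SysStep (.ge k)) [Sum.inl G.start] v

def OpenRun (G : RCCDGS T) (k i p : ℕ) (v : Word T) : Prop :=
  ∃ u₀ r, Reaches G k u₀ ∧ (∀ a ∈ Fi G i, Sum.inl a ∉ u₀) ∧ p ≤ r ∧
    iter (cfStep (Pi G i)) r u₀ v

def StOK (G : RCCDGS T) (k j : ℕ) (q : St) (x : Word T) (A : ℕ) (z : Word T) : Prop :=
  match q with
  | .idle => Reaches G k (x ++ [Sum.inl A] ++ z)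
  | .cnt i t => 1 ≤ t ∧ t ≤ k ∧ i < nn G ∧ OpenRun G k i (t - 1) (x ++ [Sum.inl A] ++ z)
  | .cint i t s => 1 ≤ t ∧ t ≤ k ∧ i < nn G ∧ 1 ≤ s ∧ s ≤ j - 2 ∧
      OpenRun G k i (t - 1) (x ++ [Sum.inl A] ++ z)
  | _ => False

def GoodCfg (G : RCCDGS T) (k j : ℕ) (α : Word T) : Prop :=
  (PureW α ∧ Reaches G k α) ∨
  (∃ q x A z, α = MkF G q x A z ∧ Lo G x ∧ Lo G z ∧ A < MB G ∧ StOK G k j q x A z)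

theorem msym_mem_MkF {G : RCCDGS T} {q : St} {x z : Word T} {A : ℕ} :
    msym G A q ∈ MkF G q x A z := by simp [MkF]


theorem mem_MkF_left {G : RCCDGS T} {q : St} {x z : Word T} {A a : ℕ}
    (h : (Sum.inl a : Sym T) ∈ x) : (Sum.inl a : Sym T) ∈ MkF G q x A z :=
  List.mem_append.2 (Or.inl (List.mem_append.2 (Or.inl h)))

theorem mem_MkF_right {G : RCCDGS T} {q : St} {x z : Word T} {A a : ℕ}
    (h : (Sum.inl a : Sym T) ∈ z) : (Sum.inl a : Sym T) ∈ MkF G q x A z :=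
  List.mem_append.2 (Or.inr h)

theorem sound_step {G : RCCDGS T} {k j : ℕ} (hk : 1 ≤ k) (hj : 2 ≤ j)
    (hP : ∀ C ∈ G.comps, C.perm = ∅)
    {α β : Word T} (hα : GoodCfg G k j α)
    (h : (simG G k j).SysStep (.ge j) α β) : GoodCfg G k j β := by
  obtain ⟨C, hC, hmode, hperm, hforb⟩ := h
  rcases hα with ⟨hpure, -⟩ | ⟨q, x, A, z, rfl, hx, hz, hA, hq⟩
  · exact absurd hmode (fun hm => no_run_of_pure (by omega) hpure hm)
  rcases mem_simG_comps.1 hC with ⟨i, hi, rfl | rfl | ⟨t, ht1, ht2, rfl⟩⟩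
  · -- B-component
    cases q with
    | idle =>
        have hreach : Reaches G k (x ++ [Sum.inl A] ++ z) := hq
        obtain ⟨m, hm, hiter⟩ := hmode
        obtain ⟨hle, rfl⟩ := runB hx hz (show iter _ m (MkF G (bPath j i 0) x A z) _ from hiter)
          (by omega)
        have hbj : bPath j i (0 + m) = .cnt i 1 := by
          unfold bPath
          rw [if_neg (by omega), if_neg (by omega)]
        refine Or.inr ⟨.cnt i 1, x, A, z, by rw [← hbj], hx, hz, hA, le_refl _, hk, hi,
          x ++ [Sum.inl A] ++ z, 0, hreach, ?_, by omega, rfl⟩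
        intro a ha hmem
        rcases List.mem_append.1 hmem with hmem' | hmem'
        · rcases List.mem_append.1 hmem' with hmem'' | hmem''
          · exact hforb a (Finset.mem_union.2 (Or.inl (Finset.mem_union.2 (Or.inl ha))))
              (mem_MkF_left hmem'')
          · have haA : a = A := by simpa using hmem''
            subst haA
            exact hforb (enc G a .idle)
              (Finset.mem_union.2 (Or.inl (Finset.mem_union.2 (Or.inr
                (Finset.mem_image.2 ⟨a, ha, rfl⟩)))))
              msym_mem_MkF
        · exact hforb a (Finset.mem_union.2 (Or.inl (Finset.mem_union.2 (Or.inl ha))))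
            (mem_MkF_right hmem')
    | cnt i' t' =>
        obtain ⟨ht1', ht2', hi', -⟩ := hq
        exact absurd msym_mem_MkF
          (hforb (enc G A (St.cnt i' t')) (Finset.mem_union.2 (Or.inr
            (enc_mem_forbMarks_iff.2 ⟨hA, mem_allStL_cnt hi' (by omega), by simp⟩))))
    | cint i' t' s' =>
        obtain ⟨ht1', ht2', hi', hs1, hs2, -⟩ := hq
        exact absurd msym_mem_MkF
          (hforb (enc G A (St.cint i' t' s')) (Finset.mem_union.2 (Or.inr
            (enc_mem_forbMarks_iff.2 ⟨hA, mem_allStL_cint hi' (by omega) (by omega),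
              by simp⟩))))
    | b i' s' => exact hq.elim
    | fin i' s' => exact hq.elim
  · -- Fin-component
    cases q with
    | idle =>
        exact absurd msym_mem_MkF
          (hforb (enc G A St.idle) (Finset.mem_union.2 (Or.inr
            (enc_mem_forbMarks_iff.2 ⟨hA, mem_allStL_idle, by simp⟩))))
    | cnt i' t' =>
        obtain ⟨ht1', ht2', hi', hopen⟩ := hq
        by_cases hii : i' = i ∧ t' = k
        · obtain ⟨rfl, rfl⟩ := hii
          obtain ⟨u₀, r, hu₀, hF, hpr, hit0⟩ := hopen
          have hxp : PureW x := fun a hmem =>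
            hforb a (Finset.mem_union.2 (Or.inl (Finset.mem_range.2 (hx a hmem))))
              (mem_MkF_left hmem)
          have hzp : PureW z := fun a hmem =>
            hforb a (Finset.mem_union.2 (Or.inl (Finset.mem_range.2 (hz a hmem))))
              (mem_MkF_right hmem)
          obtain ⟨m, hm, hiter⟩ := hmode
          rcases runF hi hj (show iter _ m (MkF G (fPath _ _ 0) x A z) _ from hiter)
              hxp hzp (by omega) with ⟨h1, -⟩ | ⟨-, r₀, hr₀, hlhs, hterm, hβ⟩
          · omega
          · subst hβ
            refine Or.inl ⟨PureW_append.2 ⟨PureW_append.2 ⟨hxp, PureW_of_all_isRight hterm⟩,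
              hzp⟩, ?_⟩
            refine Relation.ReflTransGen.tail hu₀
              ⟨_, comp_mem hi, ⟨r + 1, by omega, ?_⟩, ?_, hF⟩
            · exact iter_trans hit0 ⟨x ++ r₀.rhs ++ z, ⟨r₀, hr₀, x, z, by rw [hlhs], rfl⟩, rfl⟩
            · rw [hP _ (comp_mem hi)]; intro a ha; simp at ha
        · exact absurd msym_mem_MkF
            (hforb (enc G A (St.cnt i' t')) (Finset.mem_union.2 (Or.inr
              (enc_mem_forbMarks_iff.2 ⟨hA, mem_allStL_cnt hi' (by omega), by
                intro hcon
                rw [List.mem_singleton, St.cnt.injEq] at hcon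
                exact hii ⟨hcon.1, hcon.2⟩⟩))))
    | cint i' t' s' =>
        obtain ⟨ht1', ht2', hi', hs1, hs2, -⟩ := hq
        exact absurd msym_mem_MkF
          (hforb (enc G A (St.cint i' t' s')) (Finset.mem_union.2 (Or.inr
            (enc_mem_forbMarks_iff.2 ⟨hA, mem_allStL_cint hi' (by omega) (by omega),
              by simp⟩))))
    | b i' s' => exact hq.elim
    | fin i' s' => exact hq.elim
  · -- D-component
    have hmain : ∀ ρ₀ : ℕ, ρ₀ ≤ j - 1 → MkF G q x A z = MkF G (dPath k j i t ρ₀) x A z →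
        OpenRun G k i (t - 1) (x ++ [Sum.inl A] ++ z) → GoodCfg G k j β := by
      intro ρ₀ hρ₀ heq hopen
      obtain ⟨u₀, r, hu₀, hF, hpr, hit0⟩ := hopen
      obtain ⟨m, hm, hiter⟩ := hmode
      rw [heq] at hiter
      obtain ⟨ρ', x', A', z', a, rfl, hx', hz', hA', hle1, hle2, hcount, hiter2⟩ :=
        runD hi hj hiter hx hz hA hρ₀
      have ha1 : 1 ≤ a := by omega
      by_cases hρ' : ρ' < j - 1
      · rcases Nat.eq_zero_or_pos ρ' with rfl | hpos
        · refine Or.inr ⟨.cnt i t, x', A', z', rfl, hx', hz', hA', ht1, ht2, hi,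
            u₀, r + a, hu₀, hF, by omega, iter_trans hit0 hiter2⟩
        · refine Or.inr ⟨.cint i t ρ', x', A', z', ?_, hx', hz', hA', ht1, ht2, hi,
            by omega, by omega, u₀, r + a, hu₀, hF, by omega, iter_trans hit0 hiter2⟩
          have hd : dPath k j i t ρ' = .cint i t ρ' := by
            unfold dPath; rw [if_neg (by omega), if_pos (by omega)]
          rw [hd]
      · have hρj : ρ' = j - 1 := by omega
        by_cases htk : t = k
        · have hd : dPath k j i t ρ' = .idle := by
            unfold dPath; rw [if_neg (by omega), if_neg (by omega), if_pos htk]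
          refine Or.inr ⟨.idle, x', A', z', by rw [← hd], hx', hz', hA', ?_⟩
          refine Relation.ReflTransGen.tail hu₀
            ⟨G.comps.getD i ⟨[], ∅, ∅⟩, comp_mem hi, ⟨r + a, by omega,
              iter_trans hit0 hiter2⟩, ?_, hF⟩
          rw [hP _ (comp_mem hi)]; simp
        · have hd : dPath k j i t ρ' = .cnt i (t + 1) := by
            unfold dPath; rw [if_neg (by omega), if_neg (by omega), if_neg htk]
          refine Or.inr ⟨.cnt i (t + 1), x', A', z', by rw [← hd], hx', hz', hA',
            by omega, by omega, hi, u₀, r + a, hu₀, hF, by omega, iter_trans hit0 hiter2⟩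
    cases q with
    | idle =>
        exact absurd msym_mem_MkF
          (hforb (enc G A St.idle) (enc_mem_forbMarks_iff.2
            ⟨hA, mem_allStL_idle, by simp [dAllow]⟩))
    | cnt i' t' =>
        obtain ⟨ht1', ht2', hi', hopen⟩ := hq
        by_cases hii : i' = i ∧ t' = t
        · obtain ⟨rfl, rfl⟩ := hii
          exact hmain 0 (by omega) rfl hopen
        · exact absurd msym_mem_MkF
            (hforb (enc G A (St.cnt i' t')) (enc_mem_forbMarks_iff.2
              ⟨hA, mem_allStL_cnt hi' (by omega), by
                intro hcon
                rcases List.mem_cons.1 hcon with h | h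
                · rw [St.cnt.injEq] at h; exact hii ⟨h.1, h.2⟩
                · obtain ⟨s, -, hcon2⟩ := List.mem_map.1 h
                  exact St.noConfusion hcon2⟩))
    | cint i' t' s' =>
        obtain ⟨ht1', ht2', hi', hs1, hs2, hopen⟩ := hq
        by_cases hii : i' = i ∧ t' = t
        · obtain ⟨rfl, rfl⟩ := hii
          have hd : dPath k j i' t' s' = .cint i' t' s' := by
            unfold dPath; rw [if_neg (by omega), if_pos (by omega)]
          exact hmain s' (by omega) (by rw [hd]) hopen
        · exact absurd msym_mem_MkF
            (hforb (enc G A (St.cint i' t' s')) (enc_mem_forbMarks_iff.2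
              ⟨hA, mem_allStL_cint hi' (by omega) (by omega), by
                intro hcon
                rcases List.mem_cons.1 hcon with h | h
                · exact St.noConfusion h
                · obtain ⟨s, -, hcon2⟩ := List.mem_map.1 h
                  rw [St.cint.injEq] at hcon2
                  exact hii ⟨hcon2.1.symm, hcon2.2.1.symm⟩⟩))
    | b i' s' => exact hq.elim
    | fin i' s' => exact hq.elim

theorem soundness {G : RCCDGS T} {k j : ℕ} (hk : 1 ≤ k) (hj : 2 ≤ j)
    (hP : ∀ C ∈ G.comps, C.perm = ∅) {w : List T}
    (hw : w ∈ (simG G k j).lang (.ge j)) : w ∈ G.lang (.ge k) := by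
  have hgood : GoodCfg G k j (encodeWord w) := by
    have hstart : GoodCfg G k j [Sum.inl (simG G k j).start] := by
      refine Or.inr ⟨.idle, [], G.start, [], rfl, ?_, ?_, start_lt_MB G, ?_⟩
      · intro a ha; simp at ha
      · intro a ha; simp at ha
      · exact Relation.ReflTransGen.refl
    unfold RCCDGS.lang langOf at hw
    change Relation.ReflTransGen _ _ (encodeWord w) at hw
    suffices hgen : ∀ β, Relation.ReflTransGen ((simG G k j).SysStep (.ge j))
        [Sum.inl (simG G k j).start] β → GoodCfg G k j β from hgen _ hw
    intro β hβ
    induction hβ with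
    | refl => exact hstart
    | tail h1 h2 ih => exact sound_step hk hj hP ih h2
  rcases hgood with ⟨-, hr⟩ | ⟨q, x, A, z, heq, -⟩
  · exact hr
  · exfalso
    exact PureW_encodeWord w (enc G A q) (heq ▸ msym_mem_MkF)

/-! ### Completeness: marked threads -/

def Occ (T : Type) : Type := Word T × ℕ × Word T

def MkO (G : RCCDGS T) (q : St) (o : Occ T) : Word T := MkF G q o.1 o.2.1 o.2.2

def pio (o : Occ T) : Word T := o.1 ++ [Sum.inl o.2.1] ++ o.2.2

def mrules (G : RCCDGS T) (i : ℕ) (q : St) : List (CFRule T) :=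
  Pi G i ++ markedRules G (Pi G i) q

def MStep (G : RCCDGS T) (i : ℕ) (o o' : Occ T) : Prop :=
  ∀ q : St, cfStep (mrules G i q) (MkO G q o) (MkO G q o')

theorem iter_split {α : Type*} {r : α → α → Prop} :
    ∀ {a b : ℕ} {u w : α}, iter r (a + b) u w → ∃ v, iter r a u v ∧ iter r b v w
  | 0, b, u, w, h => ⟨u, rfl, by simpa using h⟩
  | a + 1, b, u, w, h => by
      rw [Nat.succ_add] at h
      obtain ⟨v, hv, h⟩ := h
      obtain ⟨x, hx1, hx2⟩ := iter_split h
      exact ⟨x, ⟨v, hv, hx1⟩, hx2⟩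

theorem cfStep_mono {P Q : List (CFRule T)} {u v : Word T} (h : ∀ r ∈ P, r ∈ Q)
    (hs : cfStep P u v) : cfStep Q u v := by
  obtain ⟨r, hr, hrw⟩ := hs
  exact ⟨r, h r hr, hrw⟩

theorem thread {G : RCCDGS T} {i : ℕ} (hi : i < nn G) :
    ∀ {m : ℕ} {u v : Word T}, iter (cfStep (Pi G i)) m u v →
      ∀ {xv : Word T} {Av : ℕ} {zv : Word T}, v = xv ++ [Sum.inl Av] ++ zv →
      ∃ xu Au zu, u = xu ++ [Sum.inl Au] ++ zu ∧
        iter (MStep G i) m ((xu, Au, zu) : Occ T) ((xv, Av, zv) : Occ T)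
  | 0, u, v, hit, xv, Av, zv, hv => by
      cases hit
      exact ⟨xv, Av, zv, hv, rfl⟩
  | m + 1, u, v, hit, xv, Av, zv, hv => by
      obtain ⟨u₁, ⟨r, hr, c, d, rfl, rfl⟩, hit'⟩ := hit
      obtain ⟨x₁, A₁, z₁, h₁, hchain⟩ := thread hi hit' hv
      rcases three_split h₁ with ⟨e, hc, hz₁⟩ | ⟨y₁, y₂, hy, hx₁, hz₁⟩ | ⟨e, hd, hx₁⟩
      · -- thread occurrence inside c
        refine ⟨x₁, A₁, e ++ [Sum.inl r.lhs] ++ d, by rw [hc]; simp, ?_⟩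
        refine ⟨(x₁, A₁, e ++ r.rhs ++ d), ?_, by rw [← hz₁]; exact hchain⟩
        intro q
        refine ⟨r, List.mem_append.2 (Or.inl hr),
          x₁ ++ [msym G A₁ q] ++ e, d, by simp [MkO, MkF], by simp [MkO, MkF]⟩
      · -- thread occurrence inside r.rhs
        refine ⟨c, r.lhs, d, rfl, ?_⟩
        refine ⟨(x₁, A₁, z₁), ?_, hchain⟩
        intro q
        refine ⟨⟨enc G r.lhs q, y₁ ++ [msym G A₁ q] ++ y₂⟩,
          List.mem_append.2 (Or.inr (mem_markedRules_iff.2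
            ⟨r, hr, y₁ ++ [msym G A₁ q] ++ y₂, by rw [hy]; exact markings_mem_of G q y₁ A₁ y₂,
              rfl⟩)), c, d, by simp [MkO, MkF, msym], ?_⟩
        rw [hx₁, hz₁]
        simp [MkO, MkF]
      · -- thread occurrence inside d
        refine ⟨c ++ [Sum.inl r.lhs] ++ e, A₁, z₁, by rw [hd]; simp, ?_⟩
        refine ⟨(c ++ r.rhs ++ e, A₁, z₁), ?_, by rw [← hx₁]; exact hchain⟩
        intro q
        refine ⟨r, List.mem_append.2 (Or.inl hr),
          c, e ++ [msym G A₁ q] ++ z₁, by simp [MkO, MkF], by simp [MkO, MkF]⟩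

/-! ### Completeness: building system steps -/

theorem mrules_sub_D {G : RCCDGS T} {k j i t : ℕ} :
    ∀ r ∈ mrules G i (.cnt i t), r ∈ (Dcomp G k j i t).rules := by
  intro r hr
  rcases List.mem_append.1 hr with h | h
  · exact List.mem_append.2 (Or.inl (List.mem_append.2 (Or.inl h)))
  · exact List.mem_append.2 (Or.inl (List.mem_append.2 (Or.inr h)))

theorem mchain_in_D {G : RCCDGS T} {k j i t : ℕ} :
    ∀ {a : ℕ} {o o' : Occ T}, iter (MStep G i) a o o' →
      iter (cfStep (Dcomp G k j i t).rules) a (MkO G (.cnt i t) o) (MkO G (.cnt i t) o')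
  | 0, o, o', h => by cases h; rfl
  | a + 1, o, o', h => by
      obtain ⟨o₁, h1, h2⟩ := h
      exact ⟨MkO G (.cnt i t) o₁, cfStep_mono mrules_sub_D (h1 (.cnt i t)),
        mchain_in_D h2⟩

theorem forb_check_marks {G : RCCDGS T} {k j : ℕ} {allow : List St} {q : St}
    {x z : Word T} {A : ℕ} (hx : Lo G x) (hz : Lo G z) (hq : q ∈ allow) :
    ∀ c ∈ forbMarks G k j allow, (Sum.inl c : Sym T) ∉ MkF G q x A z := by
  intro c hc hmem
  have hge := MB_le_of_mem_forbMarks hc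
  rcases List.mem_append.1 hmem with h | h
  · rcases List.mem_append.1 h with h' | h'
    · exact absurd (hx c h') (by omega)
    · rw [List.mem_singleton] at h'
      obtain ⟨q', -, hq', A', -, he⟩ := mem_forbMarks_iff.1 hc
      have hce : c = enc G A q := Sum.inl.inj h'
      obtain ⟨-, rfl⟩ := enc_inj (he.symm.trans hce)
      exact hq' hq
  · exact absurd (hz c h) (by omega)

theorem sys_B {G : RCCDGS T} {k j i : ℕ} (hi : i < nn G) (hj : 2 ≤ j)
    {x z : Word T} {A : ℕ} (hx : Lo G x) (hz : Lo G z) (hA : A < MB G)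
    (hchk : ∀ a ∈ Fi G i, (Sum.inl a : Sym T) ∉ x ++ [Sum.inl A] ++ z) :
    (simG G k j).SysStep (.ge j) (MkF G .idle x A z) (MkF G (.cnt i 1) x A z) := by
  refine ⟨Bcomp G k j i, mem_simG_comps.2 ⟨i, hi, Or.inl rfl⟩, ⟨j, le_refl _, ?_⟩, ?_, ?_⟩
  · have := chain_iter (p := bPath j i) (L := j) (x := x) (z := z) hA
      (fun r hr => hr) j (a := 0) (by omega)
    have h0 : bPath j i 0 = .idle := rfl
    have hj' : bPath j i (0 + j) = .cnt i 1 := by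
      unfold bPath; rw [if_neg (by omega), if_neg (by omega)]
    rw [h0, hj'] at this
    exact this
  · intro a ha; simp [Bcomp] at ha
  · intro c hc hmem
    rcases Finset.mem_union.1 hc with hc' | hc'
    · rcases Finset.mem_union.1 hc' with hc'' | hc''
      · -- c ∈ Fi G i
        rcases List.mem_append.1 hmem with h | h
        · rcases List.mem_append.1 h with h' | h'
          · exact hchk c hc'' (by simp [h'])
          · rw [List.mem_singleton] at h'
            exact absurd ((Sum.inl.inj h') ▸ forb_lt_MB hi hc'')
              (by have := MB_le_enc G A St.idle; omega)
        · exact hchk c hc'' (by simp [h])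
      · -- c = enc A' idle with A' ∈ Fi
        obtain ⟨A', hA', rfl⟩ := Finset.mem_image.1 hc''
        rcases List.mem_append.1 hmem with h | h
        · rcases List.mem_append.1 h with h' | h'
          · exact absurd (hx _ h') (by have := MB_le_enc G A' St.idle; omega)
          · rw [List.mem_singleton] at h'
            obtain ⟨rfl, -⟩ := enc_inj (Sum.inl.inj h')
            exact hchk A' hA' (by simp)
        · exact absurd (hz _ h) (by have := MB_le_enc G A' St.idle; omega)
    · exact forb_check_marks hx hz (by simp) c hc' hmem

theorem sys_D {G : RCCDGS T} {k j i t : ℕ} (hi : i < nn G) (hj : 2 ≤ j)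
    (ht1 : 1 ≤ t) (ht2 : t ≤ k) {a : ℕ} (ha : 1 ≤ a) {o o' : Occ T}
    (hchain : iter (MStep G i) a o o')
    (hx : Lo G o.1) (hz : Lo G o.2.2) (hA : o'.2.1 < MB G) :
    (simG G k j).SysStep (.ge j) (MkO G (.cnt i t) o)
      (MkF G (dPath k j i t (j - 1)) o'.1 o'.2.1 o'.2.2) := by
  refine ⟨Dcomp G k j i t, mem_simG_comps.2 ⟨i, hi, Or.inr (Or.inr ⟨t, ht1, ht2, rfl⟩)⟩,
    ⟨a + (j - 1), by omega, ?_⟩, ?_, ?_⟩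
  · refine iter_trans (mchain_in_D hchain) ?_
    have := chain_iter (p := dPath k j i t) (L := j - 1) (x := o'.1) (z := o'.2.2) hA
      (P := (Dcomp G k j i t).rules)
      (fun r hr => List.mem_append.2 (Or.inr hr)) (j - 1) (a := 0) (by omega)
    have h0 : dPath k j i t 0 = .cnt i t := rfl
    rw [h0] at this
    simpa [MkO] using this
  · intro c hc; simp [Dcomp] at hc
  · exact forb_check_marks hx hz (by simp [dAllow]) 

theorem sys_F {G : RCCDGS T} {k j i : ℕ} (hi : i < nn G) (hj : 2 ≤ j)
    {x z : Word T} {A : ℕ} (hx : PureW x) (hz : PureW z) (hA : A < MB G)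
    {r₀ : CFRule T} (hr₀ : r₀ ∈ Pi G i) (hlhs : r₀.lhs = A)
    (hterm : r₀.rhs.all Sum.isRight) :
    (simG G k j).SysStep (.ge j) (MkF G (.cnt i k) x A z) (x ++ r₀.rhs ++ z) := by
  refine ⟨Fincomp G k j i, mem_simG_comps.2 ⟨i, hi, Or.inr (Or.inl rfl)⟩,
    ⟨j, le_refl _, ?_⟩, ?_, ?_⟩
  · have hch := chain_iter (p := fPath k i) (L := j - 1) (x := x) (z := z) hA
      (P := (Fincomp G k j i).rules)
      (fun r hr => List.mem_append.2 (Or.inl hr)) (j - 1) (a := 0) (by omega)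
    have h0 : fPath k i 0 = .cnt i k := rfl
    rw [h0] at hch
    have hlast : cfStep (Fincomp G k j i).rules (MkF G (fPath k i (0 + (j - 1))) x A z)
        (x ++ r₀.rhs ++ z) := by
      refine ⟨⟨enc G r₀.lhs (.fin i (j - 1)), r₀.rhs⟩,
        List.mem_append.2 (Or.inr (mem_termRules_iff.2 ⟨r₀, hr₀, hterm, rfl⟩)), x, z, ?_, rfl⟩
      have hf : fPath k i (0 + (j - 1)) = .fin i (j - 1) := by
        unfold fPath; rw [if_neg (by omega)]; simp
      rw [hf, hlhs]
      rfl
    have := iter_trans hch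
      (show iter (cfStep (Fincomp G k j i).rules) 1 _ _ from ⟨_, hlast, rfl⟩)
    rw [show j - 1 + 1 = j by omega] at this
    exact this
  · intro c hc; simp [Fincomp] at hc
  · intro c hc hmem
    rcases Finset.mem_union.1 hc with hc' | hc'
    · have hcM := Finset.mem_range.1 hc'
      rcases List.mem_append.1 hmem with h | h
      · rcases List.mem_append.1 h with h' | h'
        · exact hx c h'
        · rw [List.mem_singleton] at h'
          exact absurd ((Sum.inl.inj h') ▸ hcM) (by have := MB_le_enc G A (St.cnt i k); omega)
      · exact hz c h
    · exact forb_check_marks (PureW.lo hx) (PureW.lo hz) (by simp) c hc' hmem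

/-! ### Completeness: occurrence bookkeeping -/

def OccLo (G : RCCDGS T) (o : Occ T) : Prop := Lo G o.1 ∧ Lo G o.2.2 ∧ o.2.1 < MB G

theorem MStep_proj {G : RCCDGS T} {i : ℕ} (hi : i < nn G) {o o' : Occ T}
    (h : MStep G i o o') (ho : OccLo G o) : OccLo G o' := by
  obtain ⟨hx, hz, hA⟩ := ho
  have hstep : cfStep (Dcomp G 1 2 i 1).rules (MkF G (dPath 1 2 i 1 0) o.1 o.2.1 o.2.2)
      (MkO G (.cnt i 1) o') :=
    cfStep_mono mrules_sub_D (h (.cnt i 1))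
  obtain ⟨x', A', z', ρ', hβ, hx', hz', hA', hρ', hcase⟩ :=
    stepD (k := 1) (j := 2) (t := 1) hi (le_refl 2) hx hz hA (by omega) hstep
  have hdec := mark_decomp hx' hz' (hβ.symm :
    x' ++ [msym G A' (dPath 1 2 i 1 ρ')] ++ z' = o'.1 ++ [Sum.inl (enc G o'.2.1 (.cnt i 1))] ++ o'.2.2)
  obtain ⟨hA2, hq2, hc2, hd2⟩ := hdec
  exact ⟨hc2 ▸ hx', hd2 ▸ hz', hA2 ▸ hA'⟩

theorem mchain_Lo {G : RCCDGS T} {i : ℕ} (hi : i < nn G) :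
    ∀ {m : ℕ} {o o' : Occ T}, iter (MStep G i) m o o' → OccLo G o → OccLo G o'
  | 0, o, o', h, ho => by cases h; exact ho
  | m + 1, o, o', h, ho => by
      obtain ⟨o₁, h1, h2⟩ := h
      exact mchain_Lo hi h2 (MStep_proj hi h1 ho)

theorem Lo_iter_pres {G : RCCDGS T} {i : ℕ} (hi : i < nn G) :
    ∀ {m : ℕ} {u v : Word T}, iter (cfStep (Pi G i)) m u v → Lo G u → Lo G v
  | 0, u, v, h, hu => by cases h; exact hu
  | m + 1, u, v, h, hu => by
      obtain ⟨u₁, ⟨r, hr, c, d, rfl, rfl⟩, h2⟩ := h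
      refine Lo_iter_pres hi h2 ?_
      have h3 := Lo_append.1 hu
      have h4 := Lo_append.1 h3.1
      exact Lo_append.2 ⟨Lo_append.2 ⟨h4.1, Lo_rhs hi hr⟩, h3.2⟩

theorem all_isRight_of_PureW {y : Word T} (h : PureW y) : y.all Sum.isRight := by
  rw [List.all_eq_true]
  intro s hs
  match s with
  | Sum.inl a => exact absurd hs (h a)
  | Sum.inr b => rfl

/-! ### Completeness: block scheduling -/

theorem blocksN {G : RCCDGS T} {k j i : ℕ} (hi : i < nn G) (hj : 2 ≤ j) :
    ∀ (n : ℕ) {t Mrem : ℕ} {o o' : Occ T}, t + n = k → 1 ≤ t → n + 1 ≤ Mrem →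
      iter (MStep G i) Mrem o o' → OccLo G o →
      Relation.ReflTransGen ((simG G k j).SysStep (.ge j))
        (MkO G (.cnt i t) o) (MkO G .idle o')
  | 0, t, Mrem, o, o', htn, ht1, hM, hch, ho => by
      have ho' := mchain_Lo hi hch ho
      have hstep := sys_D (k := k) (j := j) hi hj ht1 (by omega) (a := Mrem) (by omega)
        hch ho.1 ho.2.1 ho'.2.2
      have hd : dPath k j i t (j - 1) = .idle := by
        unfold dPath; rw [if_neg (by omega), if_neg (by omega), if_pos (by omega)]
      rw [hd] at hstep
      exact Relation.ReflTransGen.single hstep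
  | n + 1, t, Mrem, o, o', htn, ht1, hM, hch, ho => by
      obtain ⟨o₁, h1, h2⟩ := iter_split (a := 1) (b := Mrem - 1)
        (by rw [show 1 + (Mrem - 1) = Mrem by omega]; exact hch)
      have ho₁ := mchain_Lo hi h1 ho
      have hstep := sys_D (k := k) (j := j) hi hj ht1 (by omega) (a := 1) (le_refl _)
        h1 ho.1 ho.2.1 ho₁.2.2
      have hd : dPath k j i t (j - 1) = .cnt i (t + 1) := by
        unfold dPath; rw [if_neg (by omega), if_neg (by omega), if_neg (by omega)]
      rw [hd] at hstep
      exact Relation.ReflTransGen.head hstep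
        (blocksN hi hj n (by omega) (by omega) (by omega) h2 ho₁)

theorem blocksF {G : RCCDGS T} {k j i : ℕ} (hi : i < nn G) (hj : 2 ≤ j) (hk : 2 ≤ k) :
    ∀ (n : ℕ) {t Mrem : ℕ} {o o' : Occ T}, t + n = k - 1 → 1 ≤ t → n + 1 ≤ Mrem →
      iter (MStep G i) Mrem o o' → OccLo G o →
      Relation.ReflTransGen ((simG G k j).SysStep (.ge j))
        (MkO G (.cnt i t) o) (MkO G (.cnt i k) o')
  | 0, t, Mrem, o, o', htn, ht1, hM, hch, ho => by
      have ho' := mchain_Lo hi hch ho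
      have hstep := sys_D (k := k) (j := j) hi hj ht1 (by omega) (a := Mrem) (by omega)
        hch ho.1 ho.2.1 ho'.2.2
      have hd : dPath k j i t (j - 1) = .cnt i (t + 1) := by
        unfold dPath; rw [if_neg (by omega), if_neg (by omega), if_neg (by omega)]
      rw [hd, show t + 1 = k by omega] at hstep
      exact Relation.ReflTransGen.single hstep
  | n + 1, t, Mrem, o, o', htn, ht1, hM, hch, ho => by
      obtain ⟨o₁, h1, h2⟩ := iter_split (a := 1) (b := Mrem - 1)
        (by rw [show 1 + (Mrem - 1) = Mrem by omega]; exact hch)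
      have ho₁ := mchain_Lo hi h1 ho
      have hstep := sys_D (k := k) (j := j) hi hj ht1 (by omega) (a := 1) (le_refl _)
        h1 ho.1 ho.2.1 ho₁.2.2
      have hd : dPath k j i t (j - 1) = .cnt i (t + 1) := by
        unfold dPath; rw [if_neg (by omega), if_neg (by omega), if_neg (by omega)]
      rw [hd] at hstep
      exact Relation.ReflTransGen.head hstep
        (blocksF hi hj hk n (by omega) (by omega) (by omega) h2 ho₁)

/-! ### Completeness -/

theorem complete_aux {G : RCCDGS T} {k j : ℕ} (hk : 2 ≤ k) (hj : 2 ≤ j) {w : List T} :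
    ∀ {u : Word T}, Relation.ReflTransGen (G.SysStep (.ge k)) u (encodeWord w) → Lo G u →
      u = encodeWord w ∨
      ∃ x A z, u = x ++ [Sum.inl A] ++ z ∧
        Relation.ReflTransGen ((simG G k j).SysStep (.ge j))
          (MkF G .idle x A z) (encodeWord w) := by
  intro u hu
  induction hu using Relation.ReflTransGen.head_induction_on with
  | refl => intro _; exact Or.inl rfl
  | head hstep hrest ih =>
      intro hLo
      obtain ⟨C, hC, ⟨m, hm, hiter⟩, hperm, hforb⟩ := hstep
      obtain ⟨idx, hidx⟩ := List.mem_iff_getElem.1 hC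
      obtain ⟨hilt, hieq⟩ := hidx
      have hCeq : C = G.comps.getD idx ⟨[], ∅, ∅⟩ := by
        rw [List.getD_eq_getElem _ _ hilt, hieq]
      have hiPi : C.rules = Pi G idx := by rw [hCeq]; rfl
      have hiFi : C.forb = Fi G idx := by rw [hCeq]; rfl
      have hilt' : idx < nn G := hilt
      rw [hiPi] at hiter
      have hLov := Lo_iter_pres hilt' hiter hLo
      rcases ih hLov with rfl | ⟨xv, Av, zv, hvdec, hRTG⟩
      · -- final run
        obtain ⟨u₁, hit1, hlaststep⟩ := iter_succ_right.1
          (show iter (cfStep (Pi G idx)) (m - 1 + 1) _ (encodeWord w) by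
            rw [show m - 1 + 1 = m by omega]; exact hiter)
        obtain ⟨r₀, hr₀, c, d, rfl, hcd⟩ := hlaststep
        have hpure : PureW (c ++ r₀.rhs ++ d) := by rw [← hcd]; exact PureW_encodeWord w
        have hpc : PureW c := (PureW_append.1 (PureW_append.1 hpure).1).1
        have hpr : PureW r₀.rhs := (PureW_append.1 (PureW_append.1 hpure).1).2
        have hpd : PureW d := (PureW_append.1 hpure).2
        obtain ⟨xu, Au, zu, hudec, hchain⟩ := thread hilt' hit1 rfl
        have hLou : OccLo G ((xu, Au, zu) : Occ T) := by
          rw [hudec] at hLo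
          have h3 := Lo_append.1 hLo
          have h4 := Lo_append.1 h3.1
          exact ⟨h4.1, h3.2, h4.2 Au (by simp)⟩
        refine Or.inr ⟨xu, Au, zu, hudec, ?_⟩
        have hB := sys_B (k := k) (j := j) hilt' hj hLou.1 hLou.2.1 hLou.2.2
          (by rw [← hiFi, ← hudec]; exact hforb)
        refine Relation.ReflTransGen.head hB ?_
        refine Relation.ReflTransGen.trans
          (blocksF hilt' hj hk (k - 2) (by omega) (by omega) (by omega) hchain hLou) ?_
        have hF := sys_F (k := k) (j := j) hilt' hj hpc hpd (lhs_lt_MB hilt' hr₀) hr₀ rfl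
          (all_isRight_of_PureW hpr)
        rw [← hcd] at hF
        exact Relation.ReflTransGen.single hF
      · -- non-final run
        obtain ⟨xu, Au, zu, hudec, hchain⟩ := thread hilt' hiter hvdec
        have hLou : OccLo G ((xu, Au, zu) : Occ T) := by
          rw [hudec] at hLo
          have h3 := Lo_append.1 hLo
          have h4 := Lo_append.1 h3.1
          exact ⟨h4.1, h3.2, h4.2 Au (by simp)⟩
        refine Or.inr ⟨xu, Au, zu, hudec, ?_⟩
        have hB := sys_B (k := k) (j := j) hilt' hj hLou.1 hLou.2.1 hLou.2.2
          (by rw [← hiFi, ← hudec]; exact hforb)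
        refine Relation.ReflTransGen.head hB ?_
        exact Relation.ReflTransGen.trans
          (blocksN hilt' hj (k - 1) (by omega) (by omega) (by omega) hchain hLou) hRTG

theorem completeness {G : RCCDGS T} {k j : ℕ} (hk : 2 ≤ k) (hj : 2 ≤ j) {w : List T}
    (hw : w ∈ G.lang (.ge k)) : w ∈ (simG G k j).lang (.ge j) := by
  have hw' : Relation.ReflTransGen (G.SysStep (.ge k)) [Sum.inl G.start] (encodeWord w) := hw
  have hLo : Lo G [Sum.inl G.start] := by
    intro a ha
    simp only [List.mem_singleton, Sum.inl.injEq] at ha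
    exact ha ▸ start_lt_MB G
  rcases complete_aux (j := j) hk hj hw' hLo with heq | ⟨x, A, z, hdec, hRTG⟩
  · exfalso
    exact PureW_encodeWord w G.start (heq ▸ (by simp : (Sum.inl G.start : Sym T) ∈ [Sum.inl G.start]))
  · have hxz : x = [] ∧ A = G.start ∧ z = [] := by
      cases x with
      | nil =>
          simp only [List.nil_append, List.singleton_append, List.cons.injEq,
            Sum.inl.injEq] at hdec
          exact ⟨rfl, hdec.1.symm, hdec.2.symm⟩
      | cons s xs =>
          exfalso
          have := congrArg List.length hdec
          simp at this
    obtain ⟨rfl, rfl, rfl⟩ := hxz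
    exact hRTG

/-! ### Main simulation theorem and class collapse -/

theorem simG_lang {G : RCCDGS T} {k j : ℕ} (hk : 2 ≤ k) (hj : 2 ≤ j)
    (hP : ∀ C ∈ G.comps, C.perm = ∅) :
    (simG G k j).lang (.ge j) = G.lang (.ge k) := by
  apply Set.eq_of_subset_of_subset
  · intro w hw
    exact soundness (by omega) hj hP hw
  · intro w hw
    exact completeness hk hj hw

theorem simG_NE {G : RCCDGS T} {k j : ℕ} (hG : G.NonErasing) :
    (simG G k j).NonErasing := by
  intro C hC r hr
  have hmk : ∀ (q : St) (y : Word T), y ∈ markings G q r.rhs → True := fun _ _ _ => trivial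
  have hchain : ∀ {p : ℕ → St} {L : ℕ}, r ∈ chainRules G p L → r.rhs ≠ [] := by
    intro p L h
    obtain ⟨s, -, A, -, rfl⟩ := mem_chainRules_iff.1 h
    simp
  have hPi : ∀ {i : ℕ}, i < nn G → r ∈ Pi G i → r.rhs ≠ [] := by
    intro i hi h
    exact hG _ (comp_mem hi) r h
  rcases mem_simG_comps.1 hC with ⟨i, hi, rfl | rfl | ⟨t, ht1, ht2, rfl⟩⟩
  · exact hchain hr
  · rcases List.mem_append.1 hr with h | h
    · exact hchain h
    · obtain ⟨r₀, hr₀, -, rfl⟩ := mem_termRules_iff.1 h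
      exact hG _ (comp_mem hi) r₀ hr₀
  · rcases List.mem_append.1 hr with h | h
    · rcases List.mem_append.1 h with h' | h'
      · exact hPi hi h'
      · obtain ⟨r₀, hr₀, y, hy, rfl⟩ := mem_markedRules_iff.1 h'
        obtain ⟨x, B, z, -, rfl⟩ := mem_markings hy
        simp
    · exact hchain h

end

end CDCollapse

open GrammarSystems

open CDCollapse in
/-- For every `k ≥ 2`: `CD(≥k, frc) = CD(≥2, frc)` and `CD^{-λ}(≥k, frc) = CD^{-λ}(≥2, frc)`. -/
theorem CDfrc_ge_collapse (T : Type) [Fintype T] (k : ℕ) (hk : 2 ≤ k) :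
    CDfrc T (.ge k) = CDfrc T (.ge 2) ∧ CDfrcNE T (.ge k) = CDfrcNE T (.ge 2) := by
  constructor
  · apply Set.eq_of_subset_of_subset
    · rintro L ⟨G, hperm, rfl⟩
      exact ⟨simG G k 2, simG_perm, (simG_lang hk (le_refl 2) hperm).symm⟩
    · rintro L ⟨G, hperm, rfl⟩
      exact ⟨simG G 2 k, simG_perm, (simG_lang (le_refl 2) hk hperm).symm⟩
  · apply Set.eq_of_subset_of_subset
    · rintro L ⟨G, hperm, hNE, rfl⟩
      exact ⟨simG G k 2, simG_perm, simG_NE hNE, (simG_lang hk (le_refl 2) hperm).symm⟩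
    · rintro L ⟨G, hperm, hNE, rfl⟩
      exact ⟨simG G 2 k, simG_perm, simG_NE hNE, (simG_lang (le_refl 2) hk hperm).symm⟩
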